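/- arXiv:1811.06247 — 6 statements merged into one kernel-verified Lean document; each statement's English description precedes it below -/
import Mathlib

section
/- Let Λ ≥ 1 and t be natural numbers, and let L_1 ≥ L_2 ≥ … ≥ L_Λ be a nonincreasing sequence of natural numbers. For each integer j ≥ 1 define a_j = |{λ ∈ {1,…,Λ} : L_λ < j}|. Then Σ_{j=1}^{L_1} ( C(Λ, t+1) − C(a_j, t+1) ) = Σ_{i=1}^{Λ} L_i · C(Λ−i, t). -/
/-!
Fix a level `j` and let `S_j = {i ∈ [1, Λ] | j ≤ L i}`. Since `L` is nonincreasing, `S_j` is an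
initial segment `[1, m]`, and `a_j = Λ - m`. Telescoping Pascal's rule (the hockey-stick identity)
gives `C(Λ, t+1) - C(Λ - m, t+1) = Σ_{i=1}^{m} C(Λ - i, t)`, so the left-hand side is
`Σ_j Σ_{i ∈ S_j} C(Λ - i, t)`. Exchanging the two sums, cache `i` is counted once for each
level `j ≤ L i`, i.e. `L i` times.
-/

open Finset

namespace Nat

theorem sum_Icc_choose_sub_add_choose {c n : ℕ} (t : ℕ) (hc : c ≤ n) :
    ∑ i ∈ Icc 1 c, (n - i).choose t + (n - c).choose (t + 1) = n.choose (t + 1) := by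
  induction c with
  | zero => simp
  | succ c ih =>
    have hpascal :
        (n - c).choose (t + 1) = (n - (c + 1)).choose t + (n - (c + 1)).choose (t + 1) := by
      rw [show n - c = n - (c + 1) + 1 by omega, choose_succ_succ']
    rw [sum_Icc_succ_top (by omega), ← ih (by omega), hpascal, add_assoc]

end Nat

theorem exists_filter_Icc_eq_Icc {p : ℕ → Prop} [DecidablePred p] {n : ℕ}
    (hp : ∀ i k, 1 ≤ i → i ≤ k → k ≤ n → p k → p i) :
    ∃ m ≤ n, (Icc 1 n).filter p = Icc 1 m := by
  induction n with
  | zero => exact ⟨0, le_rfl, by simp⟩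
  | succ n ih =>
    rw [← insert_Icc_right_eq_Icc_add_one (by omega), filter_insert]
    by_cases hn : p (n + 1)
    · refine ⟨n + 1, le_rfl, ?_⟩
      have hall : ∀ i ∈ Icc 1 n, p i := fun i hi =>
        hp i (n + 1) (mem_Icc.1 hi).1 (by grind) le_rfl hn
      rw [if_pos hn, filter_true_of_mem hall, insert_Icc_right_eq_Icc_add_one (by omega)]
    · obtain ⟨m, hmn, hm⟩ := ih fun i k hi hik hk => hp i k hi hik (by omega)
      exact ⟨m, by omega, by rw [if_neg hn, hm]⟩

theorem choose_sub_choose_card_filter_lt_eq_sum {L : ℕ → ℕ} {n : ℕ}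
    (hL : AntitoneOn L (Set.Icc 1 n)) (t j : ℕ) :
    n.choose (t + 1) - (#{i ∈ Icc 1 n | L i < j}).choose (t + 1)
      = ∑ i ∈ Icc 1 n with j ≤ L i, (n - i).choose t := by
  obtain ⟨m, hmn, hm⟩ := exists_filter_Icc_eq_Icc (p := (j ≤ L ·)) (n := n)
    fun i k hi hik hk hjk => hjk.trans (hL ⟨hi, hik.trans hk⟩ ⟨hi.trans hik, hk⟩ hik)
  have hlow : {i ∈ Icc 1 n | L i < j} = Icc (m + 1) n := by
    ext i
    have := congrArg (i ∈ ·) hm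
    simp only [mem_filter, mem_Icc, eq_iff_iff] at this ⊢
    omega
  rw [hm, hlow, Nat.card_Icc, show n + 1 - (m + 1) = n - m by omega,
    ← Nat.sum_Icc_choose_sub_add_choose t hmn, Nat.add_sub_cancel]

theorem stmt_0_general (Λ t : ℕ) (L : ℕ → ℕ)
    (hmono : ∀ i j, 1 ≤ i → i ≤ j → j ≤ Λ → L j ≤ L i)
    (a : ℕ → ℕ)
    (ha : ∀ j, a j = ((Finset.Icc 1 Λ).filter (fun l => L l < j)).card) :
    ∑ j ∈ Finset.Icc 1 (L 1), (Nat.choose Λ (t + 1) - Nat.choose (a j) (t + 1))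
      = ∑ i ∈ Finset.Icc 1 Λ, L i * Nat.choose (Λ - i) t := by
  have hL : AntitoneOn L (Set.Icc 1 Λ) := fun i hi k hk hik => hmono i k hi.1 hik hk.2
  calc ∑ j ∈ Icc 1 (L 1), (Λ.choose (t + 1) - (a j).choose (t + 1))
      = ∑ j ∈ Icc 1 (L 1), ∑ i ∈ Icc 1 Λ with j ≤ L i, (Λ - i).choose t := by
        simp only [ha, choose_sub_choose_card_filter_lt_eq_sum hL]
    _ = ∑ i ∈ Icc 1 Λ, ∑ j ∈ Icc 1 (L 1) with j ≤ L i, (Λ - i).choose t :=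
        sum_comm' fun _ _ => by simp only [mem_filter]; tauto
    _ = ∑ i ∈ Icc 1 Λ, L i * (Λ - i).choose t := by
        refine sum_congr rfl fun i hi => ?_
        have hLi : L i ≤ L 1 := hmono 1 i le_rfl (mem_Icc.1 hi).1 (mem_Icc.1 hi).2
        have hlevels : {j ∈ Icc 1 (L 1) | j ≤ L i} = Icc 1 (L i) := by
          ext j; simp only [mem_filter, mem_Icc]; omega
        rw [hlevels, sum_const, Nat.card_Icc, smul_eq_mul, Nat.add_sub_cancel]

/-- For a nonincreasing profile `L` on `{1,…,Λ}`, with `a j` the number of caches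
`λ ∈ {1,…,Λ}` with `L λ < j`, the total number of transmissions
`Σ_{j=1}^{L 1} (C(Λ, t+1) − C(a j, t+1))` equals `Σ_{i=1}^{Λ} L i · C(Λ−i, t)`. -/
theorem stmt_0 (Λ t : ℕ) (hΛ : 1 ≤ Λ) (L : ℕ → ℕ)
    (hmono : ∀ i j, 1 ≤ i → i ≤ j → j ≤ Λ → L j ≤ L i)
    (a : ℕ → ℕ)
    (ha : ∀ j, a j = ((Finset.Icc 1 Λ).filter (fun l => L l < j)).card) :
    ∑ j ∈ Finset.Icc 1 (L 1), (Nat.choose Λ (t + 1) - Nat.choose (a j) (t + 1))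
      = ∑ i ∈ Finset.Icc 1 Λ, L i * Nat.choose (Λ - i) t :=
  stmt_0_general Λ t L hmono a ha
end

section
/- Let Λ ≥ 1, N_0 ≥ 1 and t ≤ Λ be natural numbers, and let K be a natural number divisible by Λ. Then, as rational numbers, (1/N_0) · ( Σ_{r=1}^{Λ} (K/Λ) · C(Λ−r, t) ) / C(Λ, t) = K·(1 − t/Λ) / (N_0·(t+1)). -/
/-!
The sum is `(K/Λ) · Σ_{j<Λ} C(j, t)`, which the hockey-stick identity turns into
`(K/Λ) · C(Λ, t+1)`, and `C(Λ, t+1) / C(Λ, t) = (Λ - t)/(t + 1)`.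
-/

open Finset

theorem Nat.sum_range_choose_eq_choose_succ (n k : ℕ) :
    ∑ j ∈ range n, j.choose k = n.choose (k + 1) := by
  induction n with
  | zero => simp
  | succ n ih => rw [sum_range_succ, ih, Nat.choose_succ_succ', add_comm]

theorem Finset.sum_Icc_one_reflect {M : Type*} [AddCommMonoid M] (f : ℕ → M) (n : ℕ) :
    ∑ r ∈ Icc 1 n, f (n - r) = ∑ j ∈ range n, f j := by
  rw [← Ico_add_one_right_eq_Icc, sum_Ico_reflect f 1 le_rfl]
  simp

theorem stmt_2_general (Λ N0 t K : ℕ) (hΛ : 1 ≤ Λ) (ht : t ≤ Λ) :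
    (1 / (N0 : ℚ)) *
        ((∑ r ∈ Finset.Icc 1 Λ, ((K : ℚ) / (Λ : ℚ)) * (Nat.choose (Λ - r) t : ℚ)) /
          (Nat.choose Λ t : ℚ))
      = (K : ℚ) * (1 - (t : ℚ) / (Λ : ℚ)) / ((N0 : ℚ) * ((t : ℚ) + 1)) := by
  have hsum : ∑ r ∈ Icc 1 Λ, (Nat.choose (Λ - r) t : ℚ) = Λ.choose (t + 1) := by
    rw [sum_Icc_one_reflect (fun j => (j.choose t : ℚ)), ← Nat.cast_sum,
      Nat.sum_range_choose_eq_choose_succ]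
  have hratio : (Λ.choose (t + 1) : ℚ) * (t + 1) = Λ.choose t * (Λ - t) := by
    rw [← Nat.cast_sub ht]
    exact_mod_cast Nat.choose_succ_right_eq Λ t
  have hΛ0 : (Λ : ℚ) ≠ 0 := by positivity
  have hchoose : (Λ.choose t : ℚ) ≠ 0 := by exact_mod_cast (Nat.choose_pos ht).ne'
  rw [← mul_sum, hsum]
  rcases eq_or_ne (N0 : ℚ) 0 with hN0 | hN0
  · simp [hN0]
  field_simp
  linear_combination (K : ℚ) * hratio

/-- Uniform profile closed form: for `Λ ≥ 1`, `N0 ≥ 1`, `t ≤ Λ` and `Λ ∣ K`,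
`(1/N0) · (Σ_{r=1}^{Λ} (K/Λ)·C(Λ−r,t)) / C(Λ,t) = K·(1 − t/Λ)/(N0·(t+1))`. -/
theorem stmt_2 (Λ N0 t K : ℕ) (hΛ : 1 ≤ Λ) (hN0 : 1 ≤ N0) (ht : t ≤ Λ)
    (hK : Λ ∣ K) :
    (1 / (N0 : ℚ)) *
        ((∑ r ∈ Finset.Icc 1 Λ, ((K : ℚ) / (Λ : ℚ)) * (Nat.choose (Λ - r) t : ℚ)) /
          (Nat.choose Λ t : ℚ))
      = (K : ℚ) * (1 - (t : ℚ) / (Λ : ℚ)) / ((N0 : ℚ) * ((t : ℚ) + 1)) :=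
  stmt_2_general Λ N0 t K hΛ ht
end

section
/- Let Λ ≥ 1 and i be natural numbers with i+1 ≤ Λ, and let L_1, …, L_Λ be nonnegative rational numbers. Then Σ_{r=1}^{Λ} L_r · C(Λ−r, i) / C(Λ, i) ≥ Σ_{r=1}^{Λ} L_r · C(Λ−r, i+1) / C(Λ, i+1). -/
/-! The inequality holds summand by summand: `C(m, i+1) (i+1) = C(m, i) (m - i)` shows that
`C(m, i+1) / C(m, i)` is `(m - i) / (i + 1)`, which grows with `m`, and `Λ - r ≤ Λ`. -/

theorem Nat.choose_succ_mul_choose_le {m n : ℕ} (hmn : m ≤ n) (k : ℕ) :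
    m.choose (k + 1) * n.choose k ≤ m.choose k * n.choose (k + 1) := by
  refine Nat.le_of_mul_le_mul_right ?_ k.succ_pos
  calc m.choose (k + 1) * n.choose k * (k + 1)
      = m.choose k * (m - k) * n.choose k := by
        rw [mul_right_comm, Nat.choose_succ_right_eq]
    _ ≤ m.choose k * (n - k) * n.choose k := by gcongr
    _ = m.choose k * n.choose (k + 1) * (k + 1) := by
        rw [mul_assoc _ (n.choose _), Nat.choose_succ_right_eq]; ring

theorem Nat.choose_succ_div_choose_succ_le
    {K : Type*} [Field K] [LinearOrder K] [IsStrictOrderedRing K]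
    {m n k : ℕ} (hmn : m ≤ n) (hk : k + 1 ≤ n) :
    (m.choose (k + 1) : K) / n.choose (k + 1) ≤ (m.choose k : K) / n.choose k := by
  have hpos : (0 : K) < n.choose (k + 1) := by exact_mod_cast Nat.choose_pos hk
  have hpos' : (0 : K) < n.choose k := by exact_mod_cast Nat.choose_pos (by omega)
  rw [div_le_div_iff₀ hpos hpos']
  exact_mod_cast Nat.choose_succ_mul_choose_le hmn k

theorem stmt_4_general (Λ i : ℕ) (hi : i + 1 ≤ Λ) (L : ℕ → ℚ)
    (hL : ∀ r, 0 ≤ L r) :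
    ∑ r ∈ Finset.Icc 1 Λ, L r * (Nat.choose (Λ - r) (i + 1) : ℚ) / (Nat.choose Λ (i + 1) : ℚ)
      ≤ ∑ r ∈ Finset.Icc 1 Λ, L r * (Nat.choose (Λ - r) i : ℚ) / (Nat.choose Λ i : ℚ) := by
  refine Finset.sum_le_sum fun r _ => ?_
  rw [mul_div_assoc, mul_div_assoc]
  exact mul_le_mul_of_nonneg_left (Nat.choose_succ_div_choose_succ_le (Nat.sub_le Λ r) hi) (hL r)

/-- The converse-bound coefficients `c_i = Σ_r L_r C(Λ−r,i)/C(Λ,i)` are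
nonincreasing in `i`: for `i + 1 ≤ Λ` and nonnegative rationals `L_r`,
`Σ_r L_r C(Λ−r,i)/C(Λ,i) ≥ Σ_r L_r C(Λ−r,i+1)/C(Λ,i+1)`. -/
theorem stmt_4 (Λ i : ℕ) (hΛ : 1 ≤ Λ) (hi : i + 1 ≤ Λ) (L : ℕ → ℚ)
    (hL : ∀ r, 0 ≤ L r) :
    ∑ r ∈ Finset.Icc 1 Λ, L r * (Nat.choose (Λ - r) (i + 1) : ℚ) / (Nat.choose Λ (i + 1) : ℚ)
      ≤ ∑ r ∈ Finset.Icc 1 Λ, L r * (Nat.choose (Λ - r) i : ℚ) / (Nat.choose Λ i : ℚ) :=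
  stmt_4_general Λ i hi L hL
end

section
/- Let N ≥ K ≥ 1 and Λ ≥ 1 be natural numbers, let i ≤ Λ be a natural number, and let L_1, …, L_Λ be natural numbers with 1 ≤ L_r ≤ K for every r. Writing P(n,k) for the descending factorial n!/(n−k)! (with P(n,k) = 0 when k > n), the following identity holds in the rationals: [ C(N−1, K−1) · (Λ−i) · Σ_{r=1}^{Λ} P(Λ−i−1, r−1) · (Λ−r)! · L_r · P(K−1, L_r−1) · (K−L_r)! ] / ( Λ! · P(N, K) ) = (1/N) · Σ_{r=1}^{Λ} L_r · C(Λ−r, i) / C(Λ, i). -/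
/-!
The identity holds term by term in `r`. On the user side, for `1 ≤ l ≤ K` the product
`P(K-1,l-1)·(K-l)!` is `(K-1)!`, and `N·C(N-1,K-1)·(K-1)! = P(N,K)`, so that factor is `1/N`.
On the cache side, `(Λ-i)·P(Λ-i-1,r-1) = P(Λ-i,r)`, and `C(Λ,i)·P(Λ-i,r) = P(Λ,r)·C(Λ-r,i)`
since both sides times `i!` equal `P(Λ,i+r)`; finally `P(Λ,r)·(Λ-r)! = Λ!`.
-/

open Nat

theorem Nat.mul_descFactorial_pred (n : ℕ) {r : ℕ} (hr : r ≠ 0) :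
    n * (n - 1).descFactorial (r - 1) = n.descFactorial r := by
  obtain ⟨s, rfl⟩ := Nat.exists_eq_succ_of_ne_zero hr
  cases n with
  | zero => simp
  | succ m => exact (succ_descFactorial_succ m s).symm

theorem Nat.mul_choose_pred_mul_factorial_pred (n : ℕ) {k : ℕ} (hk : k ≠ 0) :
    n * (n - 1).choose (k - 1) * (k - 1)! = n.descFactorial k := by
  rw [← n.mul_descFactorial_pred hk, descFactorial_eq_factorial_mul_choose]
  ring

theorem Nat.descFactorial_pred_mul_factorial_sub {k l : ℕ} (hl : l ≠ 0) (hlk : l ≤ k) :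
    (k - 1).descFactorial (l - 1) * (k - l)! = (k - 1)! := by
  rw [mul_comm, ← factorial_mul_descFactorial (show l - 1 ≤ k - 1 by omega),
    show k - 1 - (l - 1) = k - l by omega]

theorem Nat.choose_mul_descFactorial_sub (n i r : ℕ) :
    n.choose i * (n - i).descFactorial r = n.descFactorial r * (n - r).choose i := by
  have h := (descFactorial_mul_descFactorial (n := n) (Nat.le_add_right i r)).trans
    (descFactorial_mul_descFactorial (n := n) (Nat.le_add_left r i)).symm
  rw [Nat.add_sub_cancel_left, Nat.add_sub_cancel, descFactorial_eq_factorial_mul_choose n i,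
    descFactorial_eq_factorial_mul_choose (n - r) i] at h
  apply Nat.mul_left_cancel i.factorial_pos
  linear_combination h

theorem Nat.choose_mul_descFactorial_sub_mul_factorial {n i r : ℕ} (hr : r ≤ n) :
    n.choose i * (n - i).descFactorial r * (n - r)! = (n - r).choose i * n ! := by
  rw [n.choose_mul_descFactorial_sub, ← factorial_mul_descFactorial hr]
  ring

theorem choose_pred_mul_descFactorial_pred_div_descFactorial {N K l : ℕ} (hl : l ≠ 0)
    (hlK : l ≤ K) (hKN : K ≤ N) :
    ((N - 1).choose (K - 1) * (K - 1).descFactorial (l - 1) * (K - l)! : ℚ) /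
      N.descFactorial K = 1 / N := by
  have hN : (N : ℚ) ≠ 0 := by exact_mod_cast (show N ≠ 0 by omega)
  have hP : (N.descFactorial K : ℚ) ≠ 0 := by exact_mod_cast (descFactorial_pos.mpr hKN).ne'
  have key : (N - 1).choose (K - 1) * (K - 1).descFactorial (l - 1) * (K - l)! * N =
      N.descFactorial K := by
    rw [mul_assoc _ _ (K - l)!, descFactorial_pred_mul_factorial_sub hl hlK,
      ← N.mul_choose_pred_mul_factorial_pred (show K ≠ 0 by omega)]
    ring
  rw [div_eq_div_iff hP hN, one_mul]
  exact_mod_cast key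

theorem sub_mul_descFactorial_pred_div_factorial {n i r : ℕ} (hi : i ≤ n) (hr : r ≠ 0)
    (hrn : r ≤ n) :
    ((n : ℚ) - i) * (n - i - 1).descFactorial (r - 1) * (n - r)! / n ! =
      (n - r).choose i / n.choose i := by
  have hC : (n.choose i : ℚ) ≠ 0 := by exact_mod_cast (choose_pos hi).ne'
  have key : (n - i).descFactorial r * (n - r)! * n.choose i = (n - r).choose i * n ! := by
    rw [← choose_mul_descFactorial_sub_mul_factorial hrn]
    ring
  rw [div_eq_div_iff (by positivity) hC, ← Nat.cast_sub hi, ← Nat.cast_mul,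
    (n - i).mul_descFactorial_pred hr]
  exact_mod_cast key

theorem stmt_7_general (N K Λ i : ℕ) (hKN : K ≤ N)
    (hi : i ≤ Λ) (L : ℕ → ℕ)
    (hL : ∀ r ∈ Finset.Icc 1 Λ, 1 ≤ L r ∧ L r ≤ K) :
    ((Nat.choose (N - 1) (K - 1) : ℚ) * ((Λ : ℚ) - (i : ℚ)) *
          ∑ r ∈ Finset.Icc 1 Λ,
            (Nat.descFactorial (Λ - i - 1) (r - 1) : ℚ) *
              (Nat.factorial (Λ - r) : ℚ) * (L r : ℚ) *
              (Nat.descFactorial (K - 1) (L r - 1) : ℚ) *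
              (Nat.factorial (K - L r) : ℚ)) /
        ((Nat.factorial Λ : ℚ) * (Nat.descFactorial N K : ℚ))
      = (1 / (N : ℚ)) *
          ∑ r ∈ Finset.Icc 1 Λ,
            (L r : ℚ) * (Nat.choose (Λ - r) i : ℚ) / (Nat.choose Λ i : ℚ) := by
  rw [Finset.mul_sum, Finset.sum_div, Finset.mul_sum]
  refine Finset.sum_congr rfl fun r hr => ?_
  obtain ⟨hl, hlK⟩ := hL r hr
  obtain ⟨hr, hrΛ⟩ := Finset.mem_Icc.mp hr
  calc _ = (L r : ℚ) * (((Λ : ℚ) - i) * (Λ - i - 1).descFactorial (r - 1) * (Λ - r)! / Λ !) *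
        ((N - 1).choose (K - 1) * (K - 1).descFactorial (L r - 1) * (K - L r)! /
          N.descFactorial K) := by ring
    _ = _ := by
      rw [sub_mul_descFactorial_pred_div_factorial hi (by omega) hrΛ,
        choose_pred_mul_descFactorial_pred_div_descFactorial (by omega) hlK hKN]
      ring

/-- Simplification of the subfile-counting coefficient `Q_i` of the index-coding
converse (`P(n,k)` is the descending factorial, `Nat.descFactorial`):
`[C(N−1,K−1)·(Λ−i)·Σ_{r=1}^{Λ} P(Λ−i−1,r−1)·(Λ−r)!·L_r·P(K−1,L_r−1)·(K−L_r)!]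
  / (Λ!·P(N,K)) = (1/N)·Σ_{r=1}^{Λ} L_r·C(Λ−r,i)/C(Λ,i)`. -/
theorem stmt_7 (N K Λ i : ℕ) (hKN : K ≤ N) (hK : 1 ≤ K) (hΛ : 1 ≤ Λ)
    (hi : i ≤ Λ) (L : ℕ → ℕ)
    (hL : ∀ r ∈ Finset.Icc 1 Λ, 1 ≤ L r ∧ L r ≤ K) :
    ((Nat.choose (N - 1) (K - 1) : ℚ) * ((Λ : ℚ) - (i : ℚ)) *
          ∑ r ∈ Finset.Icc 1 Λ,
            (Nat.descFactorial (Λ - i - 1) (r - 1) : ℚ) *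
              (Nat.factorial (Λ - r) : ℚ) * (L r : ℚ) *
              (Nat.descFactorial (K - 1) (L r - 1) : ℚ) *
              (Nat.factorial (K - L r) : ℚ)) /
        ((Nat.factorial Λ : ℚ) * (Nat.descFactorial N K : ℚ))
      = (1 / (N : ℚ)) *
          ∑ r ∈ Finset.Icc 1 Λ,
            (L r : ℚ) * (Nat.choose (Λ - r) i : ℚ) / (Nat.choose Λ i : ℚ) :=
  stmt_7_general N K Λ i hKN hi L hL
end

section
/- Let Λ ≥ 1 be a natural number and let L_1, …, L_Λ be nonnegative rationals. Define c_i = Σ_{r=1}^{Λ} L_r · C(Λ−r, i) / C(Λ, i) for i ∈ {0,1,…,Λ}. Then for every 1 ≤ i ≤ Λ−1, c_{i+1} + c_{i−1} ≥ 2·c_i; that is, (c_i)_{i=0}^{Λ} is a convex sequence. -/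
/-!
By the trinomial identity `C(n, i) C(n - i, r) = C(n, r) C(n - r, i)`, each term of `c i` equals
`L r · C(Λ - i, r) / C(Λ, r)`, whose denominator no longer depends on `i`. Since
`k ↦ C(k, r)` is convex (its first difference `C(k, r - 1)` is monotone in `k`), `c` is a
nonnegative combination of convex sequences.
-/

open Finset

namespace Nat

theorem choose_mul_choose_sub_comm (n i r : ℕ) :
    n.choose i * (n - i).choose r = n.choose r * (n - r).choose i := by
  have hi := choose_mul (n := n) (Nat.le_add_right i r)
  have hr := choose_mul (n := n) (Nat.le_add_left r i)
  rw [Nat.add_sub_cancel_left] at hi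
  rw [Nat.add_sub_cancel] at hr
  rw [← hi, ← hr, choose_symm_add]

theorem cast_choose_sub_div_cast_choose {K : Type*} [Field K] [CharZero K] {n i r : ℕ}
    (hi : i ≤ n) (hr : r ≤ n) :
    ((n - r).choose i : K) / n.choose i = (n - i).choose r / n.choose r := by
  rw [div_eq_div_iff (cast_ne_zero.2 (choose_pos hi).ne')
    (cast_ne_zero.2 (choose_pos hr).ne'), mul_comm, mul_comm ((n - i).choose r : K)]
  exact_mod_cast choose_mul_choose_sub_comm n r i

theorem two_mul_choose_succ_le (k r : ℕ) :
    2 * (k + 1).choose r ≤ k.choose r + (k + 2).choose r := by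
  cases r with
  | zero => simp
  | succ s =>
    have := choose_le_choose s (k.le_add_right 1)
    rw [choose_succ_succ' (k + 1), choose_succ_succ' k]
    omega

end Nat

theorem stmt_10_general (Λ : ℕ) (L : ℕ → ℚ) (hL : ∀ r, 0 ≤ L r)
    (c : ℕ → ℚ)
    (hc : ∀ i, c i = (∑ r ∈ Finset.Icc 1 Λ, L r * (Nat.choose (Λ - r) i : ℚ)) /
      (Nat.choose Λ i : ℚ)) :
    ∀ i, 1 ≤ i → i + 1 ≤ Λ → 2 * c i ≤ c (i + 1) + c (i - 1) := by
  have hc_trinomial : ∀ i ≤ Λ, c i = ∑ r ∈ Icc 1 Λ, L r / Λ.choose r * (Λ - i).choose r := by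
    intro i hi
    rw [hc, sum_div]
    refine sum_congr rfl fun r hr ↦ ?_
    rw [mul_div_assoc, Nat.cast_choose_sub_div_cast_choose hi (mem_Icc.1 hr).2]
    ring
  intro i hi hiΛ
  obtain ⟨k, hk⟩ : ∃ k, Λ - i = k + 1 := ⟨Λ - i - 1, by omega⟩
  rw [hc_trinomial i (by omega), hc_trinomial (i + 1) hiΛ, hc_trinomial (i - 1) (by omega), mul_sum, ← sum_add_distrib,
    show Λ - (i + 1) = k by omega, show Λ - (i - 1) = k + 2 by omega, hk]
  refine sum_le_sum fun r _ ↦ ?_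
  rw [← mul_add, mul_left_comm]
  exact mul_le_mul_of_nonneg_left (by exact_mod_cast Nat.two_mul_choose_succ_le k r)
    (div_nonneg (hL r) (Nat.cast_nonneg _))

/-- Convexity of the delay sequence: with
`c i = (Σ_{r=1}^{Λ} L_r·C(Λ−r,i))/C(Λ,i)` for nonnegative rationals `L_r`,
for every `1 ≤ i ≤ Λ−1` we have `c (i+1) + c (i−1) ≥ 2·c i`. -/
theorem stmt_10 (Λ : ℕ) (hΛ : 1 ≤ Λ) (L : ℕ → ℚ) (hL : ∀ r, 0 ≤ L r)
    (c : ℕ → ℚ)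
    (hc : ∀ i, c i = (∑ r ∈ Finset.Icc 1 Λ, L r * (Nat.choose (Λ - r) i : ℚ)) /
      (Nat.choose Λ i : ℚ)) :
    ∀ i, 1 ≤ i → i + 1 ≤ Λ → 2 * c i ≤ c (i + 1) + c (i - 1) :=
  stmt_10_general Λ L hL c hc
end

section
/- Let Λ ≥ 1 and t ≤ Λ be natural numbers, let L_1, …, L_Λ be nonnegative rationals, and let x_0, …, x_Λ be nonnegative rationals with Σ_{i=0}^{Λ} x_i = 1 and Σ_{i=0}^{Λ} i·x_i ≤ t. Then Σ_{i=0}^{Λ} x_i · ( Σ_{r=1}^{Λ} L_r · C(Λ−r, i) / C(Λ, i) ) ≥ Σ_{r=1}^{Λ} L_r · C(Λ−r, t) / C(Λ, t). -/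
/-!
Swapping the roles of `i` and `r` via `C(Λ,i)·C(Λ-i,r) = C(Λ,r)·C(Λ-r,i)` turns the objective into
`∑_r L_r / C(Λ,r) · ∑_i x_i · C(Λ-i, r)`. For each `r` the map `j ↦ C(j, r)` is convex on `ℕ`, and
the weights `x_i` put mean at least `Λ - t` on `j = Λ - i`; a supporting line at `Λ - t` (with
nonnegative slope, since `C(·, r)` is also monotone) gives `∑_i x_i · C(Λ-i, r) ≥ C(Λ-t, r)`.
-/

open Finset

theorem choose_mul_choose_sub_comm (n i r : ℕ) :
    n.choose i * (n - i).choose r = n.choose r * (n - r).choose i := by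
  have hi := Nat.choose_mul (n := n) (Nat.le_add_right i r)
  have hr := Nat.choose_mul (n := n) (Nat.le_add_left r i)
  rw [Nat.add_sub_cancel_left] at hi
  rw [Nat.add_sub_cancel] at hr
  rw [← hi, ← hr, Nat.choose_symm_add]

theorem choose_add_mul_choose_le (n k r : ℕ) :
    n.choose (r + 1) + k * n.choose r ≤ (n + k).choose (r + 1) := by
  induction k with
  | zero => simp
  | succ k ih =>
    have hmono : n.choose r ≤ (n + k).choose r := Nat.choose_le_choose r (Nat.le_add_right n k)
    rw [← Nat.add_assoc, Nat.choose_succ_succ']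
    nlinarith

theorem choose_le_choose_add_mul (n k r : ℕ) :
    (n + k).choose (r + 1) ≤ n.choose (r + 1) + k * (n + k).choose r := by
  induction k with
  | zero => simp
  | succ k ih =>
    have hmono : (n + k).choose r ≤ (n + (k + 1)).choose r :=
      Nat.choose_le_choose r (by omega)
    rw [← Nat.add_assoc, Nat.choose_succ_succ'] at *
    nlinarith

/-- The supporting line of the convex function `j ↦ C(j, r+1)` at `m` has slope `C(m, r)`. -/
theorem choose_add_sub_mul_choose_le {R : Type*} [CommRing R] [LinearOrder R]
    [IsStrictOrderedRing R] (m n r : ℕ) :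
    (m.choose (r + 1) : R) + ((n : R) - m) * m.choose r ≤ n.choose (r + 1) := by
  rcases le_total m n with h | h
  · obtain ⟨k, rfl⟩ := Nat.exists_eq_add_of_le h
    have := Nat.mono_cast (α := R) (choose_add_mul_choose_le m k r)
    push_cast at this ⊢
    linarith
  · obtain ⟨k, rfl⟩ := Nat.exists_eq_add_of_le h
    have := Nat.mono_cast (α := R) (choose_le_choose_add_mul n k r)
    push_cast at this ⊢
    linarith

theorem choose_le_sum_mul_choose {ι R : Type*} [CommRing R] [LinearOrder R]
    [IsStrictOrderedRing R] (s : Finset ι) (w : ι → R) (j : ι → ℕ) (m r : ℕ)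
    (hw : ∀ i ∈ s, 0 ≤ w i) (hw1 : ∑ i ∈ s, w i = 1) (hm : (m : R) ≤ ∑ i ∈ s, w i * j i) :
    (m.choose r : R) ≤ ∑ i ∈ s, w i * (j i).choose r := by
  cases r with
  | zero => simp [hw1]
  | succ r =>
    calc (m.choose (r + 1) : R)
        ≤ m.choose (r + 1) + ((∑ i ∈ s, w i * j i) - m) * m.choose r := by
          have : (0 : R) ≤ m.choose r := Nat.cast_nonneg _
          nlinarith
      _ = ∑ i ∈ s, w i * (m.choose (r + 1) + ((j i : R) - m) * m.choose r) := by
          simp only [mul_add, sum_add_distrib, ← sum_mul, ← mul_assoc, mul_sub, sum_sub_distrib,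
            hw1]
          ring
      _ ≤ ∑ i ∈ s, w i * (j i).choose (r + 1) :=
          sum_le_sum fun i hi ↦ mul_le_mul_of_nonneg_left (choose_add_sub_mul_choose_le _ _ _)
            (hw i hi)

theorem choose_sub_div_choose_comm {K : Type*} [Field K] [CharZero K] {n i r : ℕ}
    (hi : i ≤ n) (hr : r ≤ n) :
    ((n - r).choose i : K) / n.choose i = (n - i).choose r / n.choose r := by
  have hi₀ : (n.choose i : K) ≠ 0 := Nat.cast_ne_zero.mpr (Nat.choose_pos hi).ne'
  have hr₀ : (n.choose r : K) ≠ 0 := Nat.cast_ne_zero.mpr (Nat.choose_pos hr).ne'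
  rw [div_eq_div_iff hi₀ hr₀, ← Nat.cast_mul, ← Nat.cast_mul, mul_comm _ (n.choose i),
    choose_mul_choose_sub_comm, mul_comm]

theorem stmt_11_general (Λ t : ℕ) (ht : t ≤ Λ) (L : ℕ → ℚ)
    (hL : ∀ r, 0 ≤ L r) (x : ℕ → ℚ) (hx : ∀ i, 0 ≤ x i)
    (hsum : ∑ i ∈ Finset.range (Λ + 1), x i = 1)
    (hmean : ∑ i ∈ Finset.range (Λ + 1), (i : ℚ) * x i ≤ (t : ℚ)) :
    ∑ r ∈ Finset.Icc 1 Λ, L r * (Nat.choose (Λ - r) t : ℚ) / (Nat.choose Λ t : ℚ)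
      ≤ ∑ i ∈ Finset.range (Λ + 1),
          x i * (∑ r ∈ Finset.Icc 1 Λ, L r * (Nat.choose (Λ - r) i : ℚ) /
            (Nat.choose Λ i : ℚ)) := by
  have hcoeff : ∀ i ≤ Λ, ∑ r ∈ Icc 1 Λ, L r * ((Λ - r).choose i : ℚ) / Λ.choose i
      = ∑ r ∈ Icc 1 Λ, L r / Λ.choose r * (Λ - i).choose r := fun i hi ↦
    sum_congr rfl fun r hr ↦ by
      rw [mul_div_assoc, choose_sub_div_choose_comm hi (mem_Icc.mp hr).2]
      ring
  have hmean_compl : ((Λ - t : ℕ) : ℚ) ≤ ∑ i ∈ range (Λ + 1), x i * (Λ - i : ℕ) := by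
    rw [sum_congr rfl fun i hi ↦ by rw [Nat.cast_sub (Nat.lt_succ_iff.mp (mem_range.mp hi))]]
    simp only [mul_sub, sum_sub_distrib, ← sum_mul, hsum, Nat.cast_sub ht]
    simp only [mul_comm (x _)] at hmean ⊢
    linarith
  calc _ = ∑ r ∈ Icc 1 Λ, L r / Λ.choose r * (Λ - t).choose r := hcoeff t ht
    _ ≤ ∑ r ∈ Icc 1 Λ, L r / Λ.choose r * ∑ i ∈ range (Λ + 1), x i * (Λ - i).choose r :=
      sum_le_sum fun r _ ↦ mul_le_mul_of_nonneg_left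
        (choose_le_sum_mul_choose _ _ _ _ _ (fun i _ ↦ hx i) hsum hmean_compl)
        (div_nonneg (hL r) (Nat.cast_nonneg _))
    _ = ∑ i ∈ range (Λ + 1), x i * ∑ r ∈ Icc 1 Λ, L r / Λ.choose r * (Λ - i).choose r := by
      simp only [mul_sum]
      rw [sum_comm]
      exact sum_congr rfl fun _ _ ↦ sum_congr rfl fun _ _ ↦ by ring
    _ = _ := sum_congr rfl fun i hi ↦ by
      rw [hcoeff i (Nat.lt_succ_iff.mp (mem_range.mp hi))]

/-- Optimization step of the converse: for `t ≤ Λ`, nonnegative rationals `L_r`,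
and nonnegative `x_0,…,x_Λ` with `Σ x_i = 1` and `Σ i·x_i ≤ t`,
`Σ_i x_i·(Σ_r L_r·C(Λ−r,i)/C(Λ,i)) ≥ Σ_r L_r·C(Λ−r,t)/C(Λ,t)`. -/
theorem stmt_11 (Λ t : ℕ) (hΛ : 1 ≤ Λ) (ht : t ≤ Λ) (L : ℕ → ℚ)
    (hL : ∀ r, 0 ≤ L r) (x : ℕ → ℚ) (hx : ∀ i, 0 ≤ x i)
    (hsum : ∑ i ∈ Finset.range (Λ + 1), x i = 1)
    (hmean : ∑ i ∈ Finset.range (Λ + 1), (i : ℚ) * x i ≤ (t : ℚ)) :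
    ∑ r ∈ Finset.Icc 1 Λ, L r * (Nat.choose (Λ - r) t : ℚ) / (Nat.choose Λ t : ℚ)
      ≤ ∑ i ∈ Finset.range (Λ + 1),
          x i * (∑ r ∈ Finset.Icc 1 Λ, L r * (Nat.choose (Λ - r) i : ℚ) /
            (Nat.choose Λ i : ℚ)) :=
  stmt_11_general Λ t ht L hL x hx hsum hmean
end
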